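/- Let n ≥ 2, let C^{β_n}(V;V) be the Banach space of n times continuously Fréchet differentiable φ : V → V with ‖φ‖_{β_n} := Σ_{k=0}^n sup_x ‖D^kφ(x)‖/(1+‖x‖)^{β_k} < ∞, and let W ∈ C^α([0,T]; C^{β_n}(V;V)); regard also W ∈ C^{α,β_n}([0,T]×V;V) via W(t,x) = W_t(x). For y ∈ V let ŷ ∈ L(C^{β_n}(V;V); V) be the evaluation ŷ(φ) := φ(y). Then: (i) if (Y,Ẏ) ∈ 𝓔_W^{2α}, the map t ↦ Ŷ_t (evaluation at Y_t) is α-Hölder from [0,T] into L(C^{β_n}(V;V);V), the map t ↦ Ŷ'_t defined by Ŷ'_t(φ₁)(φ₂) := Dφ₂(Y_t)(φ₁(Ẏ_t)) is α-Hölder from [0,T] into L(C^{β_n}(V;V); L(C^{β_n}(V;V);V)), and the remainder R^{Ŷ}_{s,t} := Ŷ_t − Ŷ_s − Ŷ'_s(W_t−W_s) has finite 2α-Hölder seminorm in operator norm (so (Ŷ,Ŷ') is a linear controlled rough path of W); (ii) conversely, if (Ŷ,Ŷ') with Ŷ_t = evaluation at Y_t and Ŷ'_t of the above form for some α-Hölder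 Y, Ẏ : [0,T] → V is a linear controlled rough path of W, then (Y,Ẏ) ∈ 𝓔_W^{2α}, i.e. R^Y_{s,t} := Y_t − Y_s − (W_t−W_s)(Ẏ_s) has finite 2α-Hölder seminorm in V. -/

import Mathlib

open Set

variable {V : Type*} [NormedAddCommGroup V] [NormedSpace ℝ V]

/-- `φ` is a test function of `C^{β_n}(V;V)` with norm pieces bounded by `N`. -/
def TestBound (n : ℕ) (β : ℕ → ℝ) (φ : V → V) (N : ℝ) : Prop :=
  ContDiff ℝ n φ ∧ ∀ k ≤ n, ∀ x : V, ‖iteratedFDeriv ℝ k φ x‖ ≤ N * (1 + ‖x‖) ^ (β k)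

/-!
Everything is a pointwise estimate on the ball of radius `R = sup ‖Y‖`, where a test function
of norm `N` has `‖D^k φ‖ ≤ N (1 + R)^{β_k}`. For (i), the remainder of `Ŷ` splits as the
second-order Taylor remainder `φ(Y_t) - φ(Y_s) - Dφ(Y_s)(Y_t - Y_s)`, of size `‖Y_t - Y_s‖²`,
plus `Dφ(Y_s)(R^Y_{s,t})`. For (ii), test the hypothesis against `z ↦ sin (ℓ z) • v` and
`z ↦ cos (ℓ z) • v`, where `ℓ` is a norming functional of `R^Y_{s,t}`: up to the same Taylor
error these return `cos (ℓ Y_s) ‖R^Y_{s,t}‖` and `sin (ℓ Y_s) ‖R^Y_{s,t}‖`, which cannot both be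
small since `|cos| + |sin| ≥ 1`.
-/

section Calculus

variable {E F : Type*} [NormedAddCommGroup E] [NormedSpace ℝ E]
  [NormedAddCommGroup F] [NormedSpace ℝ F]

theorem norm_fderiv_fderiv_eq_norm_iteratedFDeriv_two (f : E → F) (x : E) :
    ‖fderiv ℝ (fderiv ℝ f) x‖ = ‖iteratedFDeriv ℝ 2 f x‖ := by
  rw [← norm_iteratedFDeriv_fderiv (n := 1), norm_iteratedFDeriv_one]

theorem Convex.norm_image_sub_sub_fderiv_le {f : E → F} (hf : ContDiff ℝ 2 f) {s : Set E}
    (hs : Convex ℝ s) {M : ℝ} (hM : ∀ z ∈ s, ‖iteratedFDeriv ℝ 2 f z‖ ≤ M) {x y : E}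
    (hx : x ∈ s) (hy : y ∈ s) :
    ‖f y - f x - fderiv ℝ f x (y - x)‖ ≤ M * ‖y - x‖ ^ 2 := by
  have hf' : Differentiable ℝ (fderiv ℝ f) :=
    (hf.fderiv_right (m := 1) le_rfl).differentiable one_ne_zero
  have hM0 : 0 ≤ M := (norm_nonneg _).trans (hM x hx)
  have hD : ∀ z ∈ segment ℝ x y, ‖fderiv ℝ f z - fderiv ℝ f x‖ ≤ M * ‖y - x‖ := by
    intro z hz
    calc ‖fderiv ℝ f z - fderiv ℝ f x‖ ≤ M * ‖z - x‖ :=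
          hs.norm_image_sub_le_of_norm_fderiv_le (fun w _ => hf' w)
            (fun w hw => (norm_fderiv_fderiv_eq_norm_iteratedFDeriv_two f w).trans_le (hM w hw))
            hx (hs.segment_subset hx hy hz)
      _ ≤ M * ‖y - x‖ := by gcongr; exact norm_sub_le_of_mem_segment hz
  calc ‖f y - f x - fderiv ℝ f x (y - x)‖ ≤ M * ‖y - x‖ * ‖y - x‖ :=
        (convex_segment x y).norm_image_sub_le_of_norm_fderiv_le'
          (fun z _ => hf.differentiable two_ne_zero z) hD
          (left_mem_segment ℝ x y) (right_mem_segment ℝ x y)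
    _ = M * ‖y - x‖ ^ 2 := by ring

theorem norm_fderiv_apply_sub_sub_le {f : E → F} (hf : ContDiff ℝ 2 f) {M : ℝ}
    (hM : ∀ z, ‖iteratedFDeriv ℝ 2 f z‖ ≤ M) (x y w : E) :
    ‖fderiv ℝ f x (y - x - w)‖ ≤ ‖f y - f x - fderiv ℝ f x w‖ + M * ‖y - x‖ ^ 2 := by
  have hsplit : fderiv ℝ f x (y - x - w)
      = (f y - f x - fderiv ℝ f x w) - (f y - f x - fderiv ℝ f x (y - x)) := by
    rw [map_sub]; abel
  rw [hsplit]
  exact (norm_sub_le _ _).trans (add_le_add le_rfl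
    (convex_univ.norm_image_sub_sub_fderiv_le hf (fun z _ => hM z) trivial trivial))

theorem norm_iteratedFDeriv_comp_smul_le {f : ℝ → ℝ} {k : ℕ} (hf : ContDiff ℝ k f)
    (ℓ : E →L[ℝ] ℝ) (v : F) (x : E) :
    ‖iteratedFDeriv ℝ k (fun z => f (ℓ z) • v) x‖
      ≤ ‖v‖ * (|iteratedDeriv k f (ℓ x)| * ‖ℓ‖ ^ k) := by
  have hfℓ : ContDiff ℝ k (f ∘ ℓ) := hf.comp ℓ.contDiff
  have hcomp : (fun z => f (ℓ z) • v) = ContinuousLinearMap.toSpanSingleton ℝ v ∘ (f ∘ ℓ) := rfl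
  rw [hcomp, ContinuousLinearMap.iteratedFDeriv_comp_left _ hfℓ.contDiffAt le_rfl,
    ℓ.iteratedFDeriv_comp_right hf x le_rfl]
  refine (ContinuousLinearMap.norm_compContinuousMultilinearMap_le _ _).trans ?_
  rw [ContinuousLinearMap.norm_toSpanSingleton]
  gcongr
  refine (ContinuousMultilinearMap.norm_compContinuousLinearMap_le _ _).trans_eq ?_
  rw [norm_iteratedFDeriv_eq_norm_iteratedDeriv, Real.norm_eq_abs, Finset.prod_const,
    Finset.card_univ, Fintype.card_fin]

end Calculus

theorem exists_norm_le_of_holder {E : Type*} [SeminormedAddCommGroup E] {T α C : ℝ}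
    (hα : 0 ≤ α) {Y : ℝ → E}
    (hY : ∀ s ∈ Icc (0 : ℝ) T, ∀ t ∈ Icc (0 : ℝ) T, ‖Y t - Y s‖ ≤ C * |t - s| ^ α) :
    ∃ B, 0 ≤ B ∧ ∀ t ∈ Icc (0 : ℝ) T, ‖Y t‖ ≤ B := by
  refine ⟨‖Y 0‖ + |C| * |T| ^ α, by positivity, fun t ht => ?_⟩
  have h0 : (0 : ℝ) ∈ Icc 0 T := ⟨le_rfl, ht.1.trans ht.2⟩
  have htT : |t - 0| ≤ |T| := by
    rw [sub_zero, abs_of_nonneg ht.1, abs_of_nonneg h0.2]; exact ht.2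
  calc ‖Y t‖ ≤ ‖Y 0‖ + ‖Y t - Y 0‖ := norm_le_insert' _ _
    _ ≤ ‖Y 0‖ + |C| * |T| ^ α := by
      gcongr
      exact (hY 0 h0 t ht).trans (by gcongr; exact le_abs_self C)

theorem sq_le_mul_rpow_two_mul {a C h α : ℝ} (ha : 0 ≤ a) (hh : 0 ≤ h) (hle : a ≤ C * h ^ α) :
    a ^ 2 ≤ C ^ 2 * h ^ (2 * α) :=
  calc a ^ 2 ≤ (C * h ^ α) ^ 2 := pow_le_pow_left₀ ha hle 2
    _ = C ^ 2 * h ^ (2 * α) := by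
      rw [mul_pow, ← Real.rpow_natCast (h ^ α), ← Real.rpow_mul hh, mul_comm α]; norm_num

namespace TestBound

variable {n : ℕ} {β : ℕ → ℝ} {φ : V → V} {N R : ℝ} {x y : V}

theorem of_norm_iteratedFDeriv_le_one (hφ : ContDiff ℝ n φ) (hβ : ∀ k ≤ n, 0 ≤ β k)
    (h : ∀ k ≤ n, ∀ x, ‖iteratedFDeriv ℝ k φ x‖ ≤ 1) : TestBound n β φ 1 :=
  ⟨hφ, fun k hk x => (h k hk x).trans
    (by rw [one_mul]; exact Real.one_le_rpow (by linarith [norm_nonneg x]) (hβ k hk))⟩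

theorem nonneg (hφ : TestBound n β φ N) : 0 ≤ N := by
  simpa using (norm_nonneg _).trans (hφ.2 0 n.zero_le 0)

theorem norm_iteratedFDeriv_le (hφ : TestBound n β φ N) {k : ℕ} (hk : k ≤ n) (hβ : 0 ≤ β k)
    (hx : ‖x‖ ≤ R) : ‖iteratedFDeriv ℝ k φ x‖ ≤ N * (1 + R) ^ β k :=
  (hφ.2 k hk x).trans <| mul_le_mul_of_nonneg_left
    (Real.rpow_le_rpow (by positivity) (by linarith) hβ) hφ.nonneg

theorem norm_sub_le (hφ : TestBound n β φ N) (hn : 1 ≤ n) (hβ : 0 ≤ β 1)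
    (hx : ‖x‖ ≤ R) (hy : ‖y‖ ≤ R) : ‖φ y - φ x‖ ≤ N * (1 + R) ^ β 1 * ‖y - x‖ :=
  (convex_closedBall (0 : V) R).norm_image_sub_le_of_norm_fderiv_le
    (fun z _ => (hφ.1.differentiable (by norm_cast; omega)).differentiableAt)
    (fun z hz => by
      simpa using hφ.norm_iteratedFDeriv_le hn hβ (mem_closedBall_zero_iff.1 hz))
    (mem_closedBall_zero_iff.2 hx) (mem_closedBall_zero_iff.2 hy)

theorem norm_fderiv_sub_le (hφ : TestBound n β φ N) (hn : 2 ≤ n) (hβ : 0 ≤ β 2)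
    (hx : ‖x‖ ≤ R) (hy : ‖y‖ ≤ R) :
    ‖fderiv ℝ φ y - fderiv ℝ φ x‖ ≤ N * (1 + R) ^ β 2 * ‖y - x‖ :=
  (convex_closedBall (0 : V) R).norm_image_sub_le_of_norm_fderiv_le
    (fun z _ => ((hφ.1.fderiv_right (m := 1) (by norm_cast)).differentiable
      one_ne_zero).differentiableAt)
    (fun z hz => (norm_fderiv_fderiv_eq_norm_iteratedFDeriv_two φ z).trans_le
      (hφ.norm_iteratedFDeriv_le hn hβ (mem_closedBall_zero_iff.1 hz)))
    (mem_closedBall_zero_iff.2 hx) (mem_closedBall_zero_iff.2 hy)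

theorem norm_sub_sub_fderiv_le (hφ : TestBound n β φ N) (hn : 2 ≤ n) (hβ : 0 ≤ β 2)
    (hx : ‖x‖ ≤ R) (hy : ‖y‖ ≤ R) :
    ‖φ y - φ x - fderiv ℝ φ x (y - x)‖ ≤ N * (1 + R) ^ β 2 * ‖y - x‖ ^ 2 :=
  (convex_closedBall (0 : V) R).norm_image_sub_sub_fderiv_le (hφ.1.of_le (by norm_cast))
    (fun z hz => hφ.norm_iteratedFDeriv_le hn hβ (mem_closedBall_zero_iff.1 hz))
    (mem_closedBall_zero_iff.2 hx) (mem_closedBall_zero_iff.2 hy)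

end TestBound

section Evaluation

variable {n : ℕ} {β : ℕ → ℝ} {R : ℝ} {x y : V}

theorem TestBound.norm_fderiv_apply_sub_fderiv_apply_le {φ₁ φ₂ : V → V} {N₁ N₂ R' : ℝ}
    (hφ₁ : TestBound n β φ₁ N₁) (hφ₂ : TestBound n β φ₂ N₂) (hn : 2 ≤ n)
    (hβ : ∀ k ≤ n, 0 ≤ β k) (hx : ‖x‖ ≤ R) (hy : ‖y‖ ≤ R) {a b : V} (ha : ‖a‖ ≤ R')
    (hb : ‖b‖ ≤ R') :
    ‖fderiv ℝ φ₂ y (φ₁ b) - fderiv ℝ φ₂ x (φ₁ a)‖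
      ≤ N₁ * N₂ * ((1 + R) ^ β 1 * (1 + R') ^ β 1 * ‖b - a‖
        + (1 + R) ^ β 2 * (1 + R') ^ β 0 * ‖y - x‖) := by
  have hN₁ := hφ₁.nonneg
  have hN₂ := hφ₂.nonneg
  have hR : 0 ≤ R := (norm_nonneg x).trans hx
  have hR' : 0 ≤ R' := (norm_nonneg a).trans ha
  have hDy : ‖fderiv ℝ φ₂ y‖ ≤ N₂ * (1 + R) ^ β 1 := by
    simpa using hφ₂.norm_iteratedFDeriv_le (by omega) (hβ 1 (by omega)) hy
  have hφ₁a : ‖φ₁ a‖ ≤ N₁ * (1 + R') ^ β 0 := by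
    simpa using hφ₁.norm_iteratedFDeriv_le n.zero_le (hβ 0 n.zero_le) ha
  have hsplit : fderiv ℝ φ₂ y (φ₁ b) - fderiv ℝ φ₂ x (φ₁ a)
      = fderiv ℝ φ₂ y (φ₁ b - φ₁ a) + (fderiv ℝ φ₂ y - fderiv ℝ φ₂ x) (φ₁ a) := by
    simp only [map_sub, sub_apply]; abel
  rw [hsplit]
  calc _ ≤ ‖fderiv ℝ φ₂ y‖ * ‖φ₁ b - φ₁ a‖ + ‖fderiv ℝ φ₂ y - fderiv ℝ φ₂ x‖ * ‖φ₁ a‖ :=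
        (norm_add_le _ _).trans (add_le_add (ContinuousLinearMap.le_opNorm _ _)
          (ContinuousLinearMap.le_opNorm _ _))
    _ ≤ N₂ * (1 + R) ^ β 1 * (N₁ * (1 + R') ^ β 1 * ‖b - a‖)
        + N₂ * (1 + R) ^ β 2 * ‖y - x‖ * (N₁ * (1 + R') ^ β 0) := by
      refine add_le_add (mul_le_mul hDy ?_ (norm_nonneg _) (by positivity))
        (mul_le_mul ?_ hφ₁a (norm_nonneg _) (by positivity))
      · exact hφ₁.norm_sub_le (by omega) (hβ 1 (by omega)) ha hb
      · exact hφ₂.norm_fderiv_sub_le hn (hβ 2 hn) hx hy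
    _ = _ := by ring

theorem TestBound.norm_sub_sub_fderiv_apply_le {φ : V → V} {N : ℝ} (hφ : TestBound n β φ N)
    (hn : 2 ≤ n) (hβ : ∀ k ≤ n, 0 ≤ β k) (hx : ‖x‖ ≤ R) (hy : ‖y‖ ≤ R) (w : V) :
    ‖φ y - φ x - fderiv ℝ φ x w‖
      ≤ N * ((1 + R) ^ β 2 * ‖y - x‖ ^ 2 + (1 + R) ^ β 1 * ‖y - x - w‖) := by
  have hsplit : φ y - φ x - fderiv ℝ φ x w
      = (φ y - φ x - fderiv ℝ φ x (y - x)) + fderiv ℝ φ x (y - x - w) := by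
    rw [map_sub (fderiv ℝ φ x) (y - x) w]; abel
  have hDx : ‖fderiv ℝ φ x‖ ≤ N * (1 + R) ^ β 1 := by
    simpa using hφ.norm_iteratedFDeriv_le (by omega) (hβ 1 (by omega)) hx
  rw [hsplit]
  calc _ ≤ N * (1 + R) ^ β 2 * ‖y - x‖ ^ 2 + N * (1 + R) ^ β 1 * ‖y - x - w‖ :=
        (norm_add_le _ _).trans (add_le_add (hφ.norm_sub_sub_fderiv_le hn (hβ 2 hn) hx hy)
          ((ContinuousLinearMap.le_opNorm _ _).trans (by gcongr)))
    _ = _ := by ring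

theorem abs_deriv_mul_norm_le_of_forall_testBound (hβ : ∀ k ≤ n, 0 ≤ β k) {w : V} {ε : ℝ}
    (h : ∀ φ : V → V, TestBound n β φ 1 → ‖φ y - φ x - fderiv ℝ φ x w‖ ≤ ε) {f : ℝ → ℝ}
    (hf : ContDiff ℝ ⊤ f) (hbd : ∀ k z, |iteratedDeriv k f z| ≤ 1) {ℓ : V →L[ℝ] ℝ}
    (hℓ : ‖ℓ‖ = 1) (hℓu : ℓ (y - x - w) = ‖y - x - w‖) {v : V} (hv : ‖v‖ = 1) :
    |deriv f (ℓ x)| * ‖y - x - w‖ ≤ ε + ‖y - x‖ ^ 2 := by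
  set φ : V → V := fun z => f (ℓ z) • v
  have hφ : ∀ k : ℕ, ContDiff ℝ k φ := fun k =>
    (hf.of_le le_top |>.comp ℓ.contDiff).smul contDiff_const
  have hφ1 : ∀ k z, ‖iteratedFDeriv ℝ k φ z‖ ≤ 1 := fun k z =>
    (norm_iteratedFDeriv_comp_smul_le (hf.of_le le_top) ℓ v z).trans <| by
      rw [hv, hℓ, one_pow, mul_one, one_mul]; exact hbd k _
  have hDφ : HasFDerivAt φ ((deriv f (ℓ x) • ℓ).smulRight v) x :=
    ((hf.differentiable (by simp) (ℓ x)).hasDerivAt.comp_hasFDerivAt x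
      ℓ.hasFDerivAt).smul_const v
  calc |deriv f (ℓ x)| * ‖y - x - w‖ = ‖fderiv ℝ φ x (y - x - w)‖ := by
        simp [hDφ.fderiv, hℓu, norm_smul, hv]
    _ ≤ ‖φ y - φ x - fderiv ℝ φ x w‖ + 1 * ‖y - x‖ ^ 2 :=
        norm_fderiv_apply_sub_sub_le (hφ 2) (hφ1 2) x y w
    _ ≤ ε + ‖y - x‖ ^ 2 := by
        rw [one_mul]
        gcongr
        exact h φ (TestBound.of_norm_iteratedFDeriv_le_one (hφ n) hβ fun k _ => hφ1 k)

theorem norm_sub_sub_le_of_forall_testBound (hβ : ∀ k ≤ n, 0 ≤ β k) {w : V} {ε : ℝ}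
    (h : ∀ φ : V → V, TestBound n β φ 1 → ‖φ y - φ x - fderiv ℝ φ x w‖ ≤ ε) :
    ‖y - x - w‖ ≤ 2 * ε + 2 * ‖y - x‖ ^ 2 := by
  set u := y - x - w
  rcases eq_or_ne u 0 with hu | hu
  · have hε : 0 ≤ ε := by
      simpa using (norm_nonneg _).trans (h 0 (TestBound.of_norm_iteratedFDeriv_le_one
        contDiff_const hβ (fun k _ z => by simp)))
    rw [hu, norm_zero]; positivity
  obtain ⟨ℓ, hℓ, hℓu⟩ := exists_dual_vector ℝ u (norm_ne_zero_iff.2 hu)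
  have hsin := abs_deriv_mul_norm_le_of_forall_testBound hβ h Real.contDiff_sin
    Real.abs_iteratedDeriv_sin_le_one hℓ hℓu (norm_smul_inv_norm (𝕜 := ℝ) hu)
  have hcos := abs_deriv_mul_norm_le_of_forall_testBound hβ h Real.contDiff_cos
    Real.abs_iteratedDeriv_cos_le_one hℓ hℓu (norm_smul_inv_norm (𝕜 := ℝ) hu)
  rw [Real.deriv_sin] at hsin
  rw [Real.deriv_cos, abs_neg] at hcos
  have hone : 1 ≤ |Real.cos (ℓ x)| + |Real.sin (ℓ x)| := by
    nlinarith [Real.sin_sq_add_cos_sq (ℓ x), sq_abs (Real.sin (ℓ x)), sq_abs (Real.cos (ℓ x)),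
      abs_nonneg (Real.sin (ℓ x)), abs_nonneg (Real.cos (ℓ x))]
  nlinarith [norm_nonneg u]

end Evaluation

theorem stmt_17_general
    (T α : ℝ) (hα1 : 1 / 3 < α)
    (n : ℕ) (hn : 2 ≤ n) (β : ℕ → ℝ) (hβ : ∀ k ≤ n, 0 ≤ β k)
    (W : ℝ → V → V)
    (Y Yd : ℝ → V)
    (hYH : ∃ C : ℝ, ∀ s ∈ Icc (0 : ℝ) T, ∀ t ∈ Icc (0 : ℝ) T,
      ‖Y t - Y s‖ ≤ C * |t - s| ^ α)
    (hYdH : ∃ C : ℝ, ∀ s ∈ Icc (0 : ℝ) T, ∀ t ∈ Icc (0 : ℝ) T,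
      ‖Yd t - Yd s‖ ≤ C * |t - s| ^ α) :
    -- part (i): (Y,Ẏ) ∈ 𝓔_W^{2α} implies (Ŷ, Ŷ') is a linear controlled rough path of W
    ((∃ CR : ℝ, ∀ s ∈ Icc (0 : ℝ) T, ∀ t ∈ Icc (0 : ℝ) T,
        ‖Y t - Y s - (W t (Yd s) - W s (Yd s))‖ ≤ CR * |t - s| ^ (2 * α)) →
      -- Ŷ is α-Hölder into L(C^{β_n}(V;V);V)
      ((∃ C : ℝ, ∀ (φ : V → V) (N : ℝ), 0 ≤ N → TestBound n β φ N →
          ∀ s ∈ Icc (0 : ℝ) T, ∀ t ∈ Icc (0 : ℝ) T,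
            ‖φ (Y t) - φ (Y s)‖ ≤ C * N * |t - s| ^ α) ∧
        -- Ŷ' is α-Hölder into L(C^{β_n}(V;V); L(C^{β_n}(V;V);V))
        (∃ C : ℝ, ∀ (φ₁ φ₂ : V → V) (N₁ N₂ : ℝ), 0 ≤ N₁ → 0 ≤ N₂ →
          TestBound n β φ₁ N₁ → TestBound n β φ₂ N₂ →
          ∀ s ∈ Icc (0 : ℝ) T, ∀ t ∈ Icc (0 : ℝ) T,
            ‖fderiv ℝ φ₂ (Y t) (φ₁ (Yd t)) - fderiv ℝ φ₂ (Y s) (φ₁ (Yd s))‖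
              ≤ C * N₁ * N₂ * |t - s| ^ α) ∧
        -- the remainder R^{Ŷ}_{s,t} = Ŷ_t - Ŷ_s - Ŷ'_s(W_{s,t}) is 2α-Hölder in operator norm
        (∃ C : ℝ, ∀ (φ : V → V) (N : ℝ), 0 ≤ N → TestBound n β φ N →
          ∀ s ∈ Icc (0 : ℝ) T, ∀ t ∈ Icc (0 : ℝ) T,
            ‖φ (Y t) - φ (Y s) - fderiv ℝ φ (Y s) (W t (Yd s) - W s (Yd s))‖
              ≤ C * N * |t - s| ^ (2 * α)))) ∧
    -- part (ii): conversely, a linear controlled rough path of evaluation form gives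
    -- (Y,Ẏ) ∈ 𝓔_W^{2α}
    ((∃ C : ℝ, ∀ (φ : V → V) (N : ℝ), 0 ≤ N → TestBound n β φ N →
        ∀ s ∈ Icc (0 : ℝ) T, ∀ t ∈ Icc (0 : ℝ) T,
          ‖φ (Y t) - φ (Y s) - fderiv ℝ φ (Y s) (W t (Yd s) - W s (Yd s))‖
            ≤ C * N * |t - s| ^ (2 * α)) →
      ∃ C : ℝ, ∀ s ∈ Icc (0 : ℝ) T, ∀ t ∈ Icc (0 : ℝ) T,
        ‖Y t - Y s - (W t (Yd s) - W s (Yd s))‖ ≤ C * |t - s| ^ (2 * α)) := by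
  have hα : 0 ≤ α := by linarith
  obtain ⟨CY, hY⟩ := hYH
  obtain ⟨Cd, hYd⟩ := hYdH
  obtain ⟨B, hB, hYB⟩ := exists_norm_le_of_holder hα hY
  obtain ⟨Bd, hBd, hYdB⟩ := exists_norm_le_of_holder hα hYd
  have hY2 : ∀ s ∈ Icc (0 : ℝ) T, ∀ t ∈ Icc (0 : ℝ) T,
      ‖Y t - Y s‖ ^ 2 ≤ CY ^ 2 * |t - s| ^ (2 * α) := fun s hs t ht =>
    sq_le_mul_rpow_two_mul (norm_nonneg _) (abs_nonneg _) (hY s hs t ht)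
  refine ⟨fun ⟨CR, hR⟩ => ⟨⟨(1 + B) ^ β 1 * CY, fun φ N hN hφ s hs t ht => ?_⟩,
    ⟨(1 + B) ^ β 1 * (1 + Bd) ^ β 1 * Cd + (1 + B) ^ β 2 * (1 + Bd) ^ β 0 * CY,
      fun φ₁ φ₂ N₁ N₂ hN₁ hN₂ hφ₁ hφ₂ s hs t ht => ?_⟩,
    ⟨(1 + B) ^ β 2 * CY ^ 2 + (1 + B) ^ β 1 * CR, fun φ N hN hφ s hs t ht => ?_⟩⟩,
    fun ⟨C, H⟩ => ⟨2 * C + 2 * CY ^ 2, fun s hs t ht => ?_⟩⟩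
  · calc _ ≤ N * (1 + B) ^ β 1 * ‖Y t - Y s‖ :=
          hφ.norm_sub_le (by omega) (hβ 1 (by omega)) (hYB s hs) (hYB t ht)
      _ ≤ N * (1 + B) ^ β 1 * (CY * |t - s| ^ α) := by gcongr; exact hY s hs t ht
      _ = _ := by ring
  · calc _ ≤ _ := hφ₁.norm_fderiv_apply_sub_fderiv_apply_le hφ₂ hn hβ (hYB s hs) (hYB t ht)
          (hYdB s hs) (hYdB t ht)
      _ ≤ N₁ * N₂ * ((1 + B) ^ β 1 * (1 + Bd) ^ β 1 * (Cd * |t - s| ^ α)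
          + (1 + B) ^ β 2 * (1 + Bd) ^ β 0 * (CY * |t - s| ^ α)) := by
        gcongr; exacts [hYd s hs t ht, hY s hs t ht]
      _ = _ := by ring
  · calc _ ≤ _ := hφ.norm_sub_sub_fderiv_apply_le hn hβ (hYB s hs) (hYB t ht) _
      _ ≤ N * ((1 + B) ^ β 2 * (CY ^ 2 * |t - s| ^ (2 * α))
          + (1 + B) ^ β 1 * (CR * |t - s| ^ (2 * α))) := by
        gcongr; exacts [hY2 s hs t ht, hR s hs t ht]
      _ = _ := by ring
  · calc _ ≤ _ := norm_sub_sub_le_of_forall_testBound hβ fun φ hφ =>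
          (H φ 1 zero_le_one hφ s hs t ht).trans_eq (by rw [mul_one])
      _ ≤ 2 * (C * |t - s| ^ (2 * α)) + 2 * (CY ^ 2 * |t - s| ^ (2 * α)) := by
        gcongr; exact hY2 s hs t ht
      _ = _ := by ring

/-- Proposition 5.3: equivalence of nonlinear controlled rough paths of `W` and linear
controlled rough paths of `W` viewed as a `C^{β_n}(V;V)`-valued path, via the evaluation
operators `ŷ(φ) = φ(y)` and `Ŷ'_t(φ₁)(φ₂) = Dφ₂(Y_t)(φ₁(Ẏ_t))`.  Operator-norm
statements about `L(C^{β_n}(V;V);V)` are expressed through test functions `φ` with norm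
bound `N`. -/
theorem stmt_17
    (T α : ℝ) (hT : 0 < T) (hα1 : 1 / 3 < α) (hα2 : α ≤ 1 / 2)
    (n : ℕ) (hn : 2 ≤ n) (β : ℕ → ℝ) (hβ : ∀ k ≤ n, 0 ≤ β k)
    (W : ℝ → V → V) (NW MW : ℝ)
    (hWsm : ∀ t ∈ Icc (0 : ℝ) T, ContDiff ℝ n (W t))
    (hWval : ∀ t ∈ Icc (0 : ℝ) T, TestBound n β (W t) MW)
    (hWH : ∀ k ≤ n, ∀ s ∈ Icc (0 : ℝ) T, ∀ t ∈ Icc (0 : ℝ) T, ∀ x : V,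
      ‖iteratedFDeriv ℝ k (fun y => W t y - W s y) x‖
        ≤ NW * |t - s| ^ α * (1 + ‖x‖) ^ (β k))
    (Y Yd : ℝ → V)
    (hYH : ∃ C : ℝ, ∀ s ∈ Icc (0 : ℝ) T, ∀ t ∈ Icc (0 : ℝ) T,
      ‖Y t - Y s‖ ≤ C * |t - s| ^ α)
    (hYdH : ∃ C : ℝ, ∀ s ∈ Icc (0 : ℝ) T, ∀ t ∈ Icc (0 : ℝ) T,
      ‖Yd t - Yd s‖ ≤ C * |t - s| ^ α) :
    -- part (i): (Y,Ẏ) ∈ 𝓔_W^{2α} implies (Ŷ, Ŷ') is a linear controlled rough path of W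
    ((∃ CR : ℝ, ∀ s ∈ Icc (0 : ℝ) T, ∀ t ∈ Icc (0 : ℝ) T,
        ‖Y t - Y s - (W t (Yd s) - W s (Yd s))‖ ≤ CR * |t - s| ^ (2 * α)) →
      -- Ŷ is α-Hölder into L(C^{β_n}(V;V);V)
      ((∃ C : ℝ, ∀ (φ : V → V) (N : ℝ), 0 ≤ N → TestBound n β φ N →
          ∀ s ∈ Icc (0 : ℝ) T, ∀ t ∈ Icc (0 : ℝ) T,
            ‖φ (Y t) - φ (Y s)‖ ≤ C * N * |t - s| ^ α) ∧
        -- Ŷ' is α-Hölder into L(C^{β_n}(V;V); L(C^{β_n}(V;V);V))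
        (∃ C : ℝ, ∀ (φ₁ φ₂ : V → V) (N₁ N₂ : ℝ), 0 ≤ N₁ → 0 ≤ N₂ →
          TestBound n β φ₁ N₁ → TestBound n β φ₂ N₂ →
          ∀ s ∈ Icc (0 : ℝ) T, ∀ t ∈ Icc (0 : ℝ) T,
            ‖fderiv ℝ φ₂ (Y t) (φ₁ (Yd t)) - fderiv ℝ φ₂ (Y s) (φ₁ (Yd s))‖
              ≤ C * N₁ * N₂ * |t - s| ^ α) ∧
        -- the remainder R^{Ŷ}_{s,t} = Ŷ_t - Ŷ_s - Ŷ'_s(W_{s,t}) is 2α-Hölder in operator norm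
        (∃ C : ℝ, ∀ (φ : V → V) (N : ℝ), 0 ≤ N → TestBound n β φ N →
          ∀ s ∈ Icc (0 : ℝ) T, ∀ t ∈ Icc (0 : ℝ) T,
            ‖φ (Y t) - φ (Y s) - fderiv ℝ φ (Y s) (W t (Yd s) - W s (Yd s))‖
              ≤ C * N * |t - s| ^ (2 * α)))) ∧
    -- part (ii): conversely, a linear controlled rough path of evaluation form gives
    -- (Y,Ẏ) ∈ 𝓔_W^{2α}
    ((∃ C : ℝ, ∀ (φ : V → V) (N : ℝ), 0 ≤ N → TestBound n β φ N →
        ∀ s ∈ Icc (0 : ℝ) T, ∀ t ∈ Icc (0 : ℝ) T,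
          ‖φ (Y t) - φ (Y s) - fderiv ℝ φ (Y s) (W t (Yd s) - W s (Yd s))‖
            ≤ C * N * |t - s| ^ (2 * α)) →
      ∃ C : ℝ, ∀ s ∈ Icc (0 : ℝ) T, ∀ t ∈ Icc (0 : ℝ) T,
        ‖Y t - Y s - (W t (Yd s) - W s (Yd s))‖ ≤ C * |t - s| ^ (2 * α)) :=
  stmt_17_general T α hα1 n hn β hβ W Y Yd hYH hYdH
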